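/- arXiv:1701.07014 — 11 statements merged into one kernel-verified Lean document; each statement's English description precedes it below -/
import Mathlib

section
/- Let R be a commutative ring and let J(R) denote its Jacobson radical. The maximal spectrum Specm(R), equipped with the subspace topology induced from the Zariski topology on Spec(R), is Hausdorff if and only if the quotient ring R/J(R) is a Gelfand ring. -/
/-!
Both sides say that distinct maximal ideals `m ≠ m'` admit `a ∉ m`, `a' ∉ m'` with
`a * a' ∈ J(R)`. For the topology: the sets `D(a) = {m | a ∉ m}` form a basis of `Specm R`,
and `D(a) ∩ D(a') = D(a * a')` is empty exactly when `a * a'` lies in every maximal ideal.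
For the ring: every maximal ideal of `R` contains `J(R)`, so maximal ideals of `R ⧸ J(R)`
correspond to those of `R`, and `a * a' = 0` in `R ⧸ J(R)` means `a * a' ∈ J(R)`.
-/

/-- A commutative ring `R` is a Gelfand ring if for any two distinct maximal ideals
`m`, `m'` there are `a ∉ m`, `a' ∉ m'` with `a * a' = 0`. -/
def IsGelfandRing (R : Type*) [CommRing R] : Prop :=
  ∀ m m' : Ideal R, m.IsMaximal → m'.IsMaximal → m ≠ m' →
    ∃ a a' : R, a ∉ m ∧ a' ∉ m' ∧ a * a' = 0

open TopologicalSpace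

section

variable {R : Type*} [CommRing R]

theorem Ideal.isMaximal_map_quotientMk {I m : Ideal R} (hm : m.IsMaximal) (hI : I ≤ m) :
    (m.map (Ideal.Quotient.mk I)).IsMaximal :=
  (Ideal.map_eq_top_or_isMaximal_of_surjective _ Ideal.Quotient.mk_surjective hm).resolve_left
    fun h ↦ hm.ne_top <| by rw [← Ideal.comap_map_mk hI, h, Ideal.comap_top]

namespace MaximalSpectrum

theorem mem_jacobson_bot_iff {r : R} :
    r ∈ (⊥ : Ideal R).jacobson ↔ ∀ x : MaximalSpectrum R, r ∈ x.asIdeal := by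
  simp only [Ideal.jacobson, Submodule.mem_sInf, bot_le, true_and]
  exact ⟨fun h x ↦ h _ x.isMaximal, fun h m hm ↦ h ⟨m, hm⟩⟩

def basicOpen (a : R) : Set (MaximalSpectrum R) := {x | a ∉ x.asIdeal}

@[simp]
theorem mem_basicOpen {a : R} {x : MaximalSpectrum R} : x ∈ basicOpen a ↔ a ∉ x.asIdeal :=
  Iff.rfl

theorem isOpen_basicOpen (a : R) : IsOpen (basicOpen a) :=
  (PrimeSpectrum.basicOpen a).isOpen.preimage toPrimeSpectrum_continuous

theorem isTopologicalBasis_basicOpen :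
    IsTopologicalBasis (Set.range (basicOpen : R → Set (MaximalSpectrum R))) := by
  have := PrimeSpectrum.isTopologicalBasis_basic_opens.induced (toPrimeSpectrum (R := R))
  rwa [← Set.range_comp] at this

theorem disjoint_basicOpen_iff {a b : R} :
    Disjoint (basicOpen a) (basicOpen b) ↔ a * b ∈ (⊥ : Ideal R).jacobson := by
  simp only [Set.disjoint_left, mem_basicOpen, not_not, mem_jacobson_bot_iff,
    Ideal.IsPrime.mul_mem_iff_mem_or_mem, or_iff_not_imp_left]

theorem t2Space_iff_exists_mul_mem_jacobson :
    T2Space (MaximalSpectrum R) ↔ Pairwise fun x y : MaximalSpectrum R ↦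
      ∃ a b : R, a ∉ x.asIdeal ∧ b ∉ y.asIdeal ∧ a * b ∈ (⊥ : Ideal R).jacobson := by
  rw [t2Space_iff]
  refine forall₃_congr fun x y _ ↦ ⟨?_, ?_⟩
  · rintro ⟨U, V, hU, hV, hxU, hyV, hUV⟩
    obtain ⟨_, ⟨a, rfl⟩, hxa, haU⟩ :=
      isTopologicalBasis_basicOpen.exists_subset_of_mem_open hxU hU
    obtain ⟨_, ⟨b, rfl⟩, hyb, hbV⟩ :=
      isTopologicalBasis_basicOpen.exists_subset_of_mem_open hyV hV
    exact ⟨a, b, hxa, hyb, disjoint_basicOpen_iff.mp (hUV.mono haU hbV)⟩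
  · rintro ⟨a, b, ha, hb, hab⟩
    exact ⟨_, _, isOpen_basicOpen a, isOpen_basicOpen b, ha, hb, disjoint_basicOpen_iff.mpr hab⟩

end MaximalSpectrum

open Ideal.Quotient in
theorem isGelfandRing_quotient_iff {I : Ideal R} (hI : I ≤ (⊥ : Ideal R).jacobson) :
    IsGelfandRing (R ⧸ I) ↔ Pairwise fun x y : MaximalSpectrum R ↦
      ∃ a b : R, a ∉ x.asIdeal ∧ b ∉ y.asIdeal ∧ a * b ∈ I := by
  have hle (x : MaximalSpectrum R) : I ≤ x.asIdeal :=
    fun r hr ↦ MaximalSpectrum.mem_jacobson_bot_iff.mp (hI hr) x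
  constructor
  · intro hG x y hxy
    have hne : x.asIdeal.map (mk I) ≠ y.asIdeal.map (mk I) := fun h ↦ hxy <|
      MaximalSpectrum.ext <| by rw [← Ideal.comap_map_mk (hle x), h, Ideal.comap_map_mk (hle y)]
    obtain ⟨a', b', ha, hb, hab⟩ := hG _ _ (Ideal.isMaximal_map_quotientMk x.isMaximal (hle x))
      (Ideal.isMaximal_map_quotientMk y.isMaximal (hle y)) hne
    obtain ⟨a, rfl⟩ := mk_surjective a'
    obtain ⟨b, rfl⟩ := mk_surjective b'
    exact ⟨a, b, fun h ↦ ha (Ideal.mem_map_of_mem _ h), fun h ↦ hb (Ideal.mem_map_of_mem _ h),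
      eq_zero_iff_mem.mp (by rwa [map_mul])⟩
  · intro h M M' hM hM' hne
    obtain ⟨a, b, ha, hb, hab⟩ :=
      h (i := ⟨M.comap (mk I), Ideal.comap_isMaximal_of_surjective _ mk_surjective⟩)
        (j := ⟨M'.comap (mk I), Ideal.comap_isMaximal_of_surjective _ mk_surjective⟩)
        fun hxy ↦ hne <| Ideal.comap_injective_of_surjective _ mk_surjective <|
          congrArg MaximalSpectrum.asIdeal hxy
    exact ⟨mk I a, mk I b, ha, hb, by rwa [← map_mul, eq_zero_iff_mem]⟩

end

/-- The maximal spectrum of a commutative ring `R` (with the Zariski topology) is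
Hausdorff if and only if `R / J(R)` is a Gelfand ring, where `J(R)` is the Jacobson
radical of `R`. -/
theorem maximalSpectrum_t2_iff_quotient_jacobson_gelfand (R : Type*) [CommRing R] :
    T2Space (MaximalSpectrum R) ↔ IsGelfandRing (R ⧸ (⊥ : Ideal R).jacobson) :=
  MaximalSpectrum.t2Space_iff_exists_mul_mem_jacobson.trans
    (isGelfandRing_quotient_iff le_rfl).symm
end

section
/- Let R be a commutative ring. Then R is a Gelfand ring if and only if the prime spectrum Spec(R), with the Zariski topology, is a normal topological space (any two disjoint closed sets can be separated by disjoint open sets). -/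
open Topology

theorem exists_specializes_isClosed_singleton {X : Type*} [TopologicalSpace X] [T0Space X]
    [CompactSpace X] (x : X) : ∃ y, x ⤳ y ∧ IsClosed ({y} : Set X) := by
  obtain ⟨y, hy, hy_closed⟩ :=
    isClosed_closure.exists_closed_singleton (Set.singleton_nonempty x).closure
  exact ⟨y, specializes_iff_mem_closure.2 hy, hy_closed⟩

theorem normalSpace_iff_disjoint_nhds_of_isClosed_singleton {X : Type*} [TopologicalSpace X]
    [T0Space X] [CompactSpace X] :
    NormalSpace X ↔ ∀ x y : X, IsClosed ({x} : Set X) → IsClosed ({y} : Set X) → x ≠ y →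
      Disjoint (𝓝 x) (𝓝 y) := by
  refine ⟨fun _ x y hx hy hxy => ?_, fun h => ⟨fun s t hs ht hst => ?_⟩⟩
  · simpa only [nhdsSet_singleton] using
      disjoint_nhdsSet_nhdsSet hx hy (Set.disjoint_singleton.2 hxy)
  · rw [separatedNhds_iff_disjoint, hs.isCompact.disjoint_nhdsSet_left]
    intro x hx
    rw [ht.isCompact.disjoint_nhdsSet_right]
    intro y hy
    obtain ⟨x', hxx', hx'⟩ := exists_specializes_isClosed_singleton x
    obtain ⟨y', hyy', hy'⟩ := exists_specializes_isClosed_singleton y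
    have hne : x' ≠ y' := by
      rintro rfl
      exact hst.ne_of_mem (hxx'.mem_closed hs hx) (hyy'.mem_closed ht hy) rfl
    exact (h x' y' hx' hy' hne).mono hxx'.nhds_le_nhds hyy'.nhds_le_nhds

namespace PrimeSpectrum

variable {R : Type*} [CommRing R]

theorem nhds_basis_basicOpen (x : PrimeSpectrum R) :
    (𝓝 x).HasBasis (fun a : R => a ∉ x.asIdeal) (fun a => (basicOpen a : Set (PrimeSpectrum R))) :=
  ⟨fun t => by
    simp only [isTopologicalBasis_basic_opens.mem_nhds_iff, Set.exists_range_iff, SetLike.mem_coe,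
      mem_basicOpen]⟩

theorem disjoint_basicOpen_iff (a a' : R) :
    Disjoint (basicOpen a : Set (PrimeSpectrum R)) (basicOpen a') ↔ IsNilpotent (a * a') := by
  rw [TopologicalSpace.Opens.coe_disjoint, disjoint_iff, ← basicOpen_mul, basicOpen_eq_bot_iff]

theorem disjoint_nhds_iff {x y : PrimeSpectrum R} :
    Disjoint (𝓝 x) (𝓝 y) ↔ ∃ a a' : R, a ∉ x.asIdeal ∧ a' ∉ y.asIdeal ∧ a * a' = 0 := by
  rw [(nhds_basis_basicOpen x).disjoint_iff (nhds_basis_basicOpen y)]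
  constructor
  · rintro ⟨a, ha, a', ha', hdisj⟩
    obtain ⟨n, hn⟩ := (disjoint_basicOpen_iff a a').1 hdisj
    exact ⟨a ^ n, a' ^ n, mt (x.isPrime.mem_of_pow_mem n) ha,
      mt (y.isPrime.mem_of_pow_mem n) ha', by rw [← mul_pow, hn]⟩
  · rintro ⟨a, a', ha, ha', h⟩
    exact ⟨a, ha, a', ha', (disjoint_basicOpen_iff a a').2 (h ▸ IsNilpotent.zero)⟩

end PrimeSpectrum

theorem isGelfandRing_iff_disjoint_nhds {R : Type*} [CommRing R] :
    IsGelfandRing R ↔ ∀ x y : PrimeSpectrum R, IsClosed ({x} : Set (PrimeSpectrum R)) →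
      IsClosed ({y} : Set (PrimeSpectrum R)) → x ≠ y → Disjoint (𝓝 x) (𝓝 y) := by
  simp only [PrimeSpectrum.isClosed_singleton_iff_isMaximal, PrimeSpectrum.disjoint_nhds_iff]
  exact ⟨fun h x y hx hy hxy => h _ _ hx hy (mt PrimeSpectrum.ext hxy),
    fun h m m' hm hm' hne => h ⟨m, hm.isPrime⟩ ⟨m', hm'.isPrime⟩ hm hm'
      (mt (congrArg PrimeSpectrum.asIdeal) hne)⟩

/-- A commutative ring is Gelfand if and only if its prime spectrum is a normal
topological space. -/
theorem isGelfandRing_iff_normalSpace_primeSpectrum (R : Type*) [CommRing R] :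
    IsGelfandRing R ↔ NormalSpace (PrimeSpectrum R) := by
  rw [isGelfandRing_iff_disjoint_nhds, normalSpace_iff_disjoint_nhds_of_isClosed_singleton]
end

section
/- Let R be a commutative ring. Then R is a Gelfand ring and the maximal spectrum Specm(R) (with the Zariski topology) is totally disconnected, if and only if R is a clean ring, i.e. every element of R is the sum of a unit and an idempotent. -/
/-!
In a Gelfand ring any comaximal ideals `I`, `J` contain elements `i`, `j` with
`(1 - i) * (1 - j) = 0`. This comes from applying the Gelfand condition twice: for a maximal
`m ⊉ J`, the elements killed by something outside `m` generate `R` together with `J`; hence the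
ideal of elements killed by some `1 - j`, `j ∈ J`, lies in no maximal ideal `m ⊉ J`, so it
generates `R` together with `I`. Consequently `Specm R` is Hausdorff and each of its clopen
subsets is cut out by an idempotent. Since `Specm R` is compact, total disconnectedness gives a
clopen set containing `V(a)` and missing `V(a - 1)`, and for its idempotent `e` the element
`a - e` lies in no maximal ideal. Conversely, in a clean ring, writing an element of `I` as a unit
plus an idempotent `f` shows that comaximal `I`, `J` contain `1 - f` and `f` respectively, which
separates maximal ideals both as the Gelfand condition asks and by clopen sets.
-/

open PrimeSpectrum

def IsCleanRing (R : Type*) [CommRing R] : Prop :=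
  ∀ a : R, ∃ u e : R, IsUnit u ∧ IsIdempotentElem e ∧ a = u + e

section

variable {R : Type*} [CommRing R]

namespace Ideal

theorem eq_top_of_forall_isMaximal_not_le {I : Ideal R}
    (h : ∀ m : Ideal R, m.IsMaximal → ¬I ≤ m) : I = ⊤ := by
  by_contra hI
  obtain ⟨m, hm, hIm⟩ := exists_le_maximal I hI
  exact h m hm hIm

theorem notMem_of_one_sub_mem {m : Ideal R} (hm : m ≠ ⊤) {x : R} (h : 1 - x ∈ m) : x ∉ m :=
  fun hx => hm <| (eq_top_iff_one m).2 <| by simpa using add_mem h hx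

end Ideal

namespace MaximalSpectrum

instance : CompactSpace (MaximalSpectrum R) := by
  have hemb : Topology.IsInducing (toPrimeSpectrum (R := R)) := ⟨rfl⟩
  rw [← isCompact_univ_iff, hemb.isCompact_iff, Set.image_univ]
  refine isCompact_univ.of_subset_of_specializes (Set.subset_univ _) fun p _ => ?_
  obtain ⟨m, hm, hpm⟩ := p.asIdeal.exists_le_maximal p.2.ne_top
  exact ⟨⟨m, hm.isPrime⟩, ⟨⟨m, hm⟩, rfl⟩, (le_iff_specializes p _).mp hpm⟩

theorem exists_ideal_forall_mem_iff_le_of_isClosed {A : Set (MaximalSpectrum R)}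
    (hA : IsClosed A) : ∃ I : Ideal R, ∀ m, m ∈ A ↔ I ≤ m.asIdeal := by
  obtain ⟨C, hC, rfl⟩ := isClosed_induced_iff.mp hA
  obtain ⟨I, rfl⟩ := (isClosed_iff_zeroLocus_ideal C).mp hC
  exact ⟨I, fun _ => Iff.rfl⟩

theorem isClosed_setOf_mem (a : R) : IsClosed {m : MaximalSpectrum R | a ∈ m.asIdeal} := by
  convert (isClosed_zeroLocus {a}).preimage toPrimeSpectrum_continuous using 1
  ext m
  simp [toPrimeSpectrum]

theorem isClopen_setOf_mem_of_isIdempotentElem {e : R} (he : IsIdempotentElem e) :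
    IsClopen {m : MaximalSpectrum R | e ∈ m.asIdeal} := by
  have : IsClopen (zeroLocus {e} : Set (PrimeSpectrum R)) :=
    isClopen_iff_mul_add_zeroLocus.mpr ⟨e, 1 - e, by rw [mul_sub, mul_one, he.eq, sub_self],
      add_sub_cancel e 1, rfl⟩
  convert this.preimage toPrimeSpectrum_continuous using 1
  ext m
  simp [toPrimeSpectrum]

end MaximalSpectrum

namespace IsGelfandRing

theorem t2Space (h : IsGelfandRing R) : T2Space (MaximalSpectrum R) := by
  refine ⟨fun m n hmn => ?_⟩
  obtain ⟨a, b, ha, hb, hab⟩ :=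
    h _ _ m.isMaximal n.isMaximal fun hmn' => hmn (MaximalSpectrum.ext hmn')
  refine ⟨MaximalSpectrum.toPrimeSpectrum ⁻¹' basicOpen a,
    MaximalSpectrum.toPrimeSpectrum ⁻¹' basicOpen b,
    (basicOpen a).2.preimage MaximalSpectrum.toPrimeSpectrum_continuous,
    (basicOpen b).2.preimage MaximalSpectrum.toPrimeSpectrum_continuous, ha, hb,
    Set.disjoint_left.mpr fun p hpa hpb => ?_⟩
  exact (p.isMaximal.isPrime.mem_or_mem_of_mul_eq_zero hab).elim hpa hpb

theorem exists_notMem_mul_one_sub_eq_zero (h : IsGelfandRing R) {m J : Ideal R}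
    (hm : m.IsMaximal) (hJm : ¬J ≤ m) : ∃ x ∉ m, ∃ j ∈ J, x * (1 - j) = 0 := by
  have htop : Submodule.torsion' R R m.primeCompl ⊔ J = ⊤ := by
    refine Ideal.eq_top_of_forall_isMaximal_not_le fun n hn hle => ?_
    obtain ⟨a, b, ha, hb, hab⟩ := h m n hm hn fun hmn => hJm (hmn ▸ le_sup_right.trans hle)
    exact hb (le_sup_left.trans hle ⟨⟨a, ha⟩, hab⟩)
  obtain ⟨y, ⟨⟨x, hx⟩, hxy⟩, j, hj, hyj⟩ :=
    Submodule.mem_sup.mp (htop ▸ Submodule.mem_top : (1 : R) ∈ _)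
  exact ⟨x, hx, j, hj, by rwa [← hyj, add_sub_cancel_right]⟩

theorem exists_one_sub_mul_one_sub_eq_zero (h : IsGelfandRing R) {I J : Ideal R}
    (hIJ : I ⊔ J = ⊤) : ∃ i ∈ I, ∃ j ∈ J, (1 - i) * (1 - j) = 0 := by
  -- `Submodule.torsion' R R S` is the ideal of the `x` with `x * (1 - j) = 0` for some `j ∈ J`.
  let S : Submonoid R := (⊥ : Submonoid (R ⧸ J)).comap (Ideal.Quotient.mk J)
  have hS : ∀ s, s ∈ S ↔ 1 - s ∈ J := fun s => by
    change Ideal.Quotient.mk J s = 1 ↔ _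
    rw [← map_one (Ideal.Quotient.mk J), Ideal.Quotient.eq, ← J.neg_mem_iff, neg_sub]
  have htop : I ⊔ Submodule.torsion' R R S = ⊤ := by
    refine Ideal.eq_top_of_forall_isMaximal_not_le fun m hm hle => ?_
    have hJm : ¬J ≤ m := fun hJm =>
      hm.ne_top (top_unique (hIJ ▸ sup_le (le_sup_left.trans hle) hJm))
    obtain ⟨x, hx, j, hj, hxj⟩ := exists_notMem_mul_one_sub_eq_zero h hm hJm
    refine hx (le_sup_right.trans hle ⟨⟨1 - j, (hS _).mpr (by simpa using hj)⟩, ?_⟩)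
    rw [Submonoid.smul_def, smul_eq_mul, mul_comm, hxj]
  obtain ⟨i, hi, x, ⟨⟨s, hs⟩, hsx⟩, hix⟩ :=
    Submodule.mem_sup.mp (htop ▸ Submodule.mem_top : (1 : R) ∈ _)
  refine ⟨i, hi, 1 - s, (hS s).mp hs, ?_⟩
  rw [← hix, add_sub_cancel_left, sub_sub_cancel, mul_comm]
  exact hsx

theorem exists_isIdempotentElem_of_isClopen (h : IsGelfandRing R)
    {K : Set (MaximalSpectrum R)} (hK : IsClopen K) : ∃ e : R, IsIdempotentElem e ∧
      (∀ m ∈ K, 1 - e ∈ m.asIdeal) ∧ ∀ m ∉ K, e ∈ m.asIdeal := by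
  obtain ⟨I, hI⟩ := MaximalSpectrum.exists_ideal_forall_mem_iff_le_of_isClosed hK.isClosed
  obtain ⟨J, hJ⟩ :=
    MaximalSpectrum.exists_ideal_forall_mem_iff_le_of_isClosed hK.isOpen.isClosed_compl
  have hIJ : I ⊔ J = ⊤ := Ideal.eq_top_of_forall_isMaximal_not_le fun m hm hle =>
    (hJ ⟨m, hm⟩).mpr (le_sup_right.trans hle) ((hI ⟨m, hm⟩).mpr (le_sup_left.trans hle))
  obtain ⟨i, hi, j, hj, hij⟩ := exists_one_sub_mul_one_sub_eq_zero h hIJ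
  have hiK : ∀ m ∈ K, 1 - i ∉ m.asIdeal := fun m hm =>
    Ideal.notMem_of_one_sub_mem m.isMaximal.ne_top (by
      rw [sub_sub_cancel]; exact (hI m).mp hm hi)
  have hjK : ∀ m ∉ K, 1 - j ∉ m.asIdeal := fun m hm =>
    Ideal.notMem_of_one_sub_mem m.isMaximal.ne_top (by
      rw [sub_sub_cancel]; exact (hJ m).mp hm hj)
  have hspan : Ideal.span {1 - i, 1 - j} = ⊤ :=
    Ideal.eq_top_of_forall_isMaximal_not_le fun m hm hle => by
      by_cases hmK : (⟨m, hm⟩ : MaximalSpectrum R) ∈ K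
      · exact hiK _ hmK (hle (Ideal.subset_span (Set.mem_insert _ _)))
      · exact hjK _ hmK (hle (Ideal.subset_span (Set.mem_insert_of_mem _ rfl)))
  obtain ⟨a, b, hab⟩ := Ideal.mem_span_pair.mp (hspan ▸ Submodule.mem_top : (1 : R) ∈ _)
  have hmul : a * (1 - i) * (b * (1 - j)) = 0 := by
    rw [mul_mul_mul_comm, hij, mul_zero]
  have hsub : 1 - a * (1 - i) = b * (1 - j) := (eq_sub_of_add_eq' hab).symm
  refine ⟨a * (1 - i), (IsIdempotentElem.of_mul_add hmul hab).1, fun m hm => ?_, fun m hm => ?_⟩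
  · rw [hsub]
    refine m.asIdeal.mul_mem_left _ ?_
    exact (m.isMaximal.isPrime.mem_or_mem_of_mul_eq_zero hij).resolve_left (hiK m hm)
  · refine m.asIdeal.mul_mem_left _ ?_
    exact (m.isMaximal.isPrime.mem_or_mem_of_mul_eq_zero hij).resolve_right (hjK m hm)

theorem isCleanRing (h : IsGelfandRing R) [TotallyDisconnectedSpace (MaximalSpectrum R)] :
    IsCleanRing R := by
  have := h.t2Space
  intro a
  have hsep : {m : MaximalSpectrum R | a ∈ m.asIdeal} ⊆ {m | a - 1 ∈ m.asIdeal}ᶜ :=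
    fun m (ha : a ∈ m.asIdeal) (ha1 : a - 1 ∈ m.asIdeal) =>
      m.isMaximal.ne_top ((Ideal.eq_top_iff_one _).2 (by simpa using sub_mem ha ha1))
  obtain ⟨K, hK, haK, hKa1⟩ := exists_clopen_of_closed_subset_open
    (MaximalSpectrum.isClosed_setOf_mem a)
    (MaximalSpectrum.isClosed_setOf_mem (a - 1)).isOpen_compl hsep
  obtain ⟨e, he, heK, heKc⟩ := h.exists_isIdempotentElem_of_isClopen hK
  refine ⟨a - e, e, Ideal.span_singleton_eq_top.mp ?_, he, (sub_add_cancel a e).symm⟩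
  refine Ideal.eq_top_of_forall_isMaximal_not_le fun m hm hle => ?_
  have hae : a - e ∈ m := (Ideal.span_singleton_le_iff_mem _).mp hle
  by_cases hmK : (⟨m, hm⟩ : MaximalSpectrum R) ∈ K
  · exact hKa1 hmK (by simpa using sub_mem hae (heK _ hmK))
  · exact hmK (haK (by simpa using add_mem hae (heKc _ hmK)))

end IsGelfandRing

namespace IsCleanRing

theorem exists_isIdempotentElem_mem_one_sub_mem (h : IsCleanRing R) {I J : Ideal R}
    (hIJ : I ⊔ J = ⊤) : ∃ e : R, IsIdempotentElem e ∧ e ∈ I ∧ 1 - e ∈ J := by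
  obtain ⟨x, hx, y, hy, hxy⟩ := Submodule.mem_sup.mp (hIJ ▸ Submodule.mem_top : (1 : R) ∈ _)
  obtain ⟨_, f, ⟨u, rfl⟩, hf, rfl⟩ := h x
  refine ⟨1 - f, hf.one_sub, ?_, ?_⟩
  · have hfx : 1 - f = (1 - f) * (u + f) * ↑u⁻¹ := by
      linear_combination (f - 1) * u.mul_inv + ↑u⁻¹ * hf.eq
    rw [hfx]
    exact I.mul_mem_right _ (I.mul_mem_left _ hx)
  · have hfy : 1 - (1 - f) = f * y * -↑u⁻¹ := by
      linear_combination f * ↑u⁻¹ * hxy - f * u.mul_inv - ↑u⁻¹ * hf.eq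
    rw [hfy]
    exact J.mul_mem_right _ (J.mul_mem_left _ hy)

theorem isGelfandRing (h : IsCleanRing R) : IsGelfandRing R := by
  intro m m' hm hm' hmm'
  obtain ⟨e, he, hem, hem'⟩ :=
    h.exists_isIdempotentElem_mem_one_sub_mem (hm.coprime_of_ne hm' hmm')
  refine ⟨1 - e, e, Ideal.notMem_of_one_sub_mem hm.ne_top (by rwa [sub_sub_cancel]),
    Ideal.notMem_of_one_sub_mem hm'.ne_top hem', ?_⟩
  rw [sub_mul, one_mul, he.eq, sub_self]

theorem totallySeparatedSpace (h : IsCleanRing R) :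
    TotallySeparatedSpace (MaximalSpectrum R) := by
  refine totallySeparatedSpace_iff_exists_isClopen.mpr fun m m' hmm' => ?_
  obtain ⟨e, he, hem, hem'⟩ := h.exists_isIdempotentElem_mem_one_sub_mem
    (m.isMaximal.coprime_of_ne m'.isMaximal fun h => hmm' (MaximalSpectrum.ext h))
  exact ⟨_, MaximalSpectrum.isClopen_setOf_mem_of_isIdempotentElem he, hem,
    Ideal.notMem_of_one_sub_mem m'.isMaximal.ne_top hem'⟩

end IsCleanRing

end

/-- `R` is Gelfand with totally disconnected maximal spectrum if and only if `R` is
clean, i.e. every element is the sum of a unit and an idempotent. -/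
theorem isGelfand_and_totallyDisconnected_iff_clean (R : Type*) [CommRing R] :
    (IsGelfandRing R ∧ TotallyDisconnectedSpace (MaximalSpectrum R)) ↔
      (∀ a : R, ∃ u e : R, IsUnit u ∧ IsIdempotentElem e ∧ a = u + e) :=
  ⟨fun ⟨hG, _⟩ => hG.isCleanRing, fun h =>
    ⟨IsCleanRing.isGelfandRing h,
      (IsCleanRing.totallySeparatedSpace h).totallyDisconnectedSpace⟩⟩
end

section
/- Let a < b be real numbers and let D = [a,b]. The ring B(D) of all bounded functions f : D → ℝ (with pointwise operations) is clean: every f ∈ B(D) can be written as u + e where u is a unit of B(D) and e ∈ B(D) is idempotent. -/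
/-! Clean decompositions are made pointwise: let `e` be the indicator of the set where
`|f| < 1/2` and `u = f - e`. Then `e` is idempotent and `|u| ≥ 1/2` everywhere, so `1/u` is
bounded by `2` and `u` is a unit. -/

/-- The ring of all bounded real-valued functions on a type `D`, a subring of the
product ring `D → ℝ` with pointwise operations. -/
def boundedFunctions (D : Type*) : Subring (D → ℝ) where
  carrier := {f | ∃ C, ∀ x, |f x| ≤ C}
  add_mem' := by
    rintro f g ⟨Cf, hCf⟩ ⟨Cg, hCg⟩
    exact ⟨Cf + Cg, fun x => (abs_add_le _ _).trans (add_le_add (hCf x) (hCg x))⟩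
  mul_mem' := by
    rintro f g ⟨Cf, hCf⟩ ⟨Cg, hCg⟩
    refine ⟨max Cf 0 * max Cg 0, fun x => ?_⟩
    rw [Pi.mul_apply, abs_mul]
    exact mul_le_mul ((hCf x).trans (le_max_left _ _)) ((hCg x).trans (le_max_left _ _))
      (abs_nonneg _) (le_max_right _ _)
  one_mem' := ⟨1, fun x => by simp⟩
  zero_mem' := ⟨0, fun x => by simp⟩
  neg_mem' := by
    rintro f ⟨Cf, hCf⟩
    exact ⟨Cf, fun x => by simpa using hCf x⟩

theorem half_le_abs_sub_ite_abs_lt_half (t : ℝ) :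
    1 / 2 ≤ |t - if |t| < 1 / 2 then 1 else 0| := by
  split_ifs with ht
  · have := abs_sub_abs_le_abs_sub 1 t
    rw [abs_sub_comm] at this
    norm_num at this
    linarith
  · simpa using not_lt.mp ht

namespace boundedFunctions

variable {D : Type*}

theorem isUnit_of_le_abs {u : boundedFunctions D} {c : ℝ} (hc : 0 < c)
    (hu : ∀ x, c ≤ |u.1 x|) : IsUnit u := by
  have hu₀ (x : D) : u.1 x ≠ 0 := abs_pos.mp (hc.trans_le (hu x))
  have hinv : (fun x => (u.1 x)⁻¹) ∈ boundedFunctions D :=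
    ⟨c⁻¹, fun x => by rw [abs_inv]; exact inv_anti₀ hc (hu x)⟩
  refine IsUnit.of_mul_eq_one ⟨_, hinv⟩ (Subtype.ext (funext fun x => ?_))
  exact mul_inv_cancel₀ (hu₀ x)

theorem isIdempotentElem_of_eq_zero_or_eq_one {e : boundedFunctions D}
    (he : ∀ x, e.1 x = 0 ∨ e.1 x = 1) : IsIdempotentElem e :=
  Subtype.ext <| funext fun x => by
    rcases he x with h | h <;> simp [h]

noncomputable def smallIndicator (f : boundedFunctions D) : boundedFunctions D :=
  ⟨fun x => if |f.1 x| < 1 / 2 then 1 else 0, 1, fun x => by dsimp only; split_ifs <;> norm_num⟩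

theorem isIdempotentElem_smallIndicator (f : boundedFunctions D) :
    IsIdempotentElem (smallIndicator f) :=
  isIdempotentElem_of_eq_zero_or_eq_one fun _ => (ite_eq_or_eq _ _ _).symm

theorem isUnit_sub_smallIndicator (f : boundedFunctions D) :
    IsUnit (f - smallIndicator f) :=
  isUnit_of_le_abs one_half_pos fun x => half_le_abs_sub_ite_abs_lt_half (f.1 x)

theorem exists_isUnit_isIdempotentElem_eq_add (f : boundedFunctions D) :
    ∃ u e : boundedFunctions D, IsUnit u ∧ IsIdempotentElem e ∧ f = u + e :=
  ⟨_, _, isUnit_sub_smallIndicator f, isIdempotentElem_smallIndicator f,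
    (sub_add_cancel f _).symm⟩

end boundedFunctions

theorem boundedFunctions_Icc_clean_general (a b : ℝ) :
    ∀ f : ↥(boundedFunctions ↥(Set.Icc a b)),
      ∃ u e : ↥(boundedFunctions ↥(Set.Icc a b)),
        IsUnit u ∧ IsIdempotentElem e ∧ f = u + e :=
  boundedFunctions.exists_isUnit_isIdempotentElem_eq_add

/-- For `D = [a,b]` with `a < b`, the ring `B(D)` of all bounded functions
`D → ℝ` is clean: every element is the sum of a unit and an idempotent. -/
theorem boundedFunctions_Icc_clean (a b : ℝ) (hab : a < b) :
    ∀ f : ↥(boundedFunctions ↥(Set.Icc a b)),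
      ∃ u e : ↥(boundedFunctions ↥(Set.Icc a b)),
        IsUnit u ∧ IsIdempotentElem e ∧ f = u + e :=
  boundedFunctions_Icc_clean_general a b
end

section
/- Let a < b be real numbers and let D = [a,b]. Let B(D) be the ring of all bounded functions f : D → ℝ with pointwise operations. Then the maximal spectrum Specm(B(D)), with the Zariski topology, is Hausdorff and totally disconnected. -/
/-!
Every idempotent `e` of a commutative ring cuts out a clopen subset `{P | e ∈ P}` of the
spectrum, so the maximal spectrum is totally separated as soon as any two maximal ideals are
told apart by an idempotent. In `B(D)` the indicator functions supply these: if `f ∈ I \ J`,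
then `f` is invertible modulo `J`, say `g f + u = 1` with `u ∈ J`, so `|u| ≥ 1/2` wherever `|f|`
is small, and the indicator `e` of the set where `|f|` is not small lies in `I` (it is a bounded
multiple of `f`), while `1 - e` lies in `J` (it is a bounded multiple of `u`).
-/

theorem MaximalSpectrum.totallySeparatedSpace_of_exists_isIdempotentElem {R : Type*}
    [CommRing R] (h : Pairwise fun I J : MaximalSpectrum R ↦
      ∃ e, IsIdempotentElem e ∧ e ∈ I.asIdeal ∧ e ∉ J.asIdeal) :
    TotallySeparatedSpace (MaximalSpectrum R) := by
  rw [totallySeparatedSpace_iff_exists_isClopen]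
  intro I J hIJ
  obtain ⟨e, he, heI, heJ⟩ := h hIJ
  refine ⟨toPrimeSpectrum ⁻¹' PrimeSpectrum.zeroLocus {e}, ?_, ?_, ?_⟩
  · exact (PrimeSpectrum.isClopen_iff_zeroLocus.2 ⟨e, he, rfl⟩).preimage
      toPrimeSpectrum_continuous
  · exact Set.singleton_subset_iff.2 heI
  · exact fun hJ ↦ heJ (Set.singleton_subset_iff.1 hJ)

namespace boundedFunctions

variable {D : Type*}

theorem exists_pos_bound (f : boundedFunctions D) : ∃ C > 0, ∀ x, |f.1 x| ≤ C := by
  obtain ⟨C, hC⟩ := f.2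
  exact ⟨|C| + 1, by positivity, fun x ↦ (hC x).trans (by linarith [le_abs_self C])⟩

noncomputable def indicator (s : Set D) : boundedFunctions D :=
  ⟨s.indicator 1, 1, fun x ↦ by by_cases hx : x ∈ s <;> simp [hx]⟩

theorem isIdempotentElem_indicator (s : Set D) : IsIdempotentElem (indicator s) :=
  Subtype.ext <| funext fun x ↦ by by_cases hx : x ∈ s <;> simp [indicator, hx]

theorem one_sub_indicator (s : Set D) : 1 - indicator s = indicator sᶜ :=
  Subtype.ext <| funext fun x ↦ by by_cases hx : x ∈ s <;> simp [indicator, hx]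

theorem indicator_mem_of_le_abs {I : Ideal (boundedFunctions D)} {f : boundedFunctions D}
    (hf : f ∈ I) {δ : ℝ} (hδ : 0 < δ) {s : Set D} (hs : ∀ x ∈ s, δ ≤ |f.1 x|) :
    indicator s ∈ I := by
  let h : boundedFunctions D := ⟨s.indicator fun x ↦ (f.1 x)⁻¹, δ⁻¹, fun x ↦ by
    by_cases hx : x ∈ s
    · simpa [hx, abs_inv] using inv_anti₀ hδ (hs x hx)
    · simp [hx, hδ.le]⟩
  have hhf : h * f = indicator s := Subtype.ext <| funext fun x ↦ by
    by_cases hx : x ∈ s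
    · have hfx : f.1 x ≠ 0 := abs_pos.1 (hδ.trans_le (hs x hx))
      simp [h, indicator, hx, hfx]
    · simp [h, indicator, hx]
  exact hhf ▸ I.mul_mem_left h hf

theorem exists_isIdempotentElem_mem_not_mem {I J : Ideal (boundedFunctions D)}
    [hJ : J.IsMaximal] (hIJ : ¬I ≤ J) : ∃ e, IsIdempotentElem e ∧ e ∈ I ∧ e ∉ J := by
  obtain ⟨f, hfI, hfJ⟩ := SetLike.not_le_iff_exists.1 hIJ
  obtain ⟨g, u, huJ, hgfu⟩ := hJ.exists_inv hfJ
  obtain ⟨C, hC, hgC⟩ := exists_pos_bound g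
  set ε := (2 * C)⁻¹
  have hε : 0 < ε := by positivity
  set s := {x | ε ≤ |f.1 x|}
  have heI : indicator s ∈ I := indicator_mem_of_le_abs hfI hε fun x hx ↦ hx
  have hu_large : ∀ x ∉ s, 1 / 2 ≤ |u.1 x| := by
    intro x hx
    have hux : u.1 x = 1 - g.1 x * f.1 x := by
      have := congrFun (congrArg Subtype.val hgfu) x
      simp only [Subring.coe_add, Subring.coe_mul, Pi.add_apply, Pi.mul_apply,
        OneMemClass.coe_one, Pi.one_apply] at this
      linarith
    have hgf : |g.1 x * f.1 x| ≤ 1 / 2 := calc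
      |g.1 x * f.1 x| ≤ C * ε := by
        rw [abs_mul]
        exact mul_le_mul (hgC x) (not_le.1 hx).le (abs_nonneg _) hC.le
      _ = 1 / 2 := by simp only [ε]; field_simp
    rw [hux]
    linarith [abs_sub_abs_le_abs_sub 1 (g.1 x * f.1 x), abs_one (α := ℝ)]
  have heJ : 1 - indicator s ∈ J :=
    one_sub_indicator s ▸ indicator_mem_of_le_abs huJ one_half_pos hu_large
  refine ⟨indicator s, isIdempotentElem_indicator s, heI, fun he ↦ ?_⟩
  exact hJ.ne_top (J.eq_top_of_isUnit_mem (by simpa using J.add_mem he heJ) isUnit_one)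

instance : TotallySeparatedSpace (MaximalSpectrum (boundedFunctions D)) :=
  MaximalSpectrum.totallySeparatedSpace_of_exists_isIdempotentElem fun I J hIJ ↦
    exists_isIdempotentElem_mem_not_mem fun hle ↦
      hIJ (MaximalSpectrum.ext (I.isMaximal.eq_of_le J.isMaximal.ne_top hle))

end boundedFunctions

theorem maximalSpectrum_boundedFunctions_t2_and_totallyDisconnected_general
    (a b : ℝ) :
    T2Space (MaximalSpectrum ↥(boundedFunctions ↥(Set.Icc a b))) ∧
      TotallyDisconnectedSpace (MaximalSpectrum ↥(boundedFunctions ↥(Set.Icc a b))) :=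
  ⟨inferInstance, inferInstance⟩

/-- For `D = [a,b]` with `a < b`, the maximal spectrum of the ring `B(D)` of all
bounded functions `D → ℝ`, with the Zariski topology, is Hausdorff and totally
disconnected. -/
theorem maximalSpectrum_boundedFunctions_t2_and_totallyDisconnected
    (a b : ℝ) (hab : a < b) :
    T2Space (MaximalSpectrum ↥(boundedFunctions ↥(Set.Icc a b))) ∧
      TotallyDisconnectedSpace (MaximalSpectrum ↥(boundedFunctions ↥(Set.Icc a b))) :=
  maximalSpectrum_boundedFunctions_t2_and_totallyDisconnected_general a b
end

section
/- Let a < b be real numbers, D = [a,b] with its subspace topology, and let R be the ℝ-subalgebra of the product ring (D → ℝ) consisting of all bounded functions f : D → ℝ whose set of discontinuity points is finite. Then f ∈ R is a unit of R if and only if there exists ε > 0 such that |f(x)| ≥ ε for all x ∈ D. -/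
open Set Filter Topology

/-- The ℝ-subalgebra of the product ring `W → ℝ` consisting of all bounded
functions with finitely many discontinuity points. -/
def pcAlg (W : Type*) [TopologicalSpace W] : Subalgebra ℝ (W → ℝ) where
  carrier := {f | (∃ C, ∀ x, |f x| ≤ C) ∧ {x | ¬ ContinuousAt f x}.Finite}
  add_mem' := by
    rintro f g ⟨⟨Cf, hCf⟩, hf⟩ ⟨⟨Cg, hCg⟩, hg⟩
    refine ⟨⟨Cf + Cg, fun x => ?_⟩, (hf.union hg).subset fun x hx => ?_⟩
    · exact (abs_add_le _ _).trans (add_le_add (hCf x) (hCg x))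
    · simp only [mem_union, mem_setOf_eq] at hx ⊢
      by_contra h
      push_neg at h
      exact hx (h.1.add h.2)
  mul_mem' := by
    rintro f g ⟨⟨Cf, hCf⟩, hf⟩ ⟨⟨Cg, hCg⟩, hg⟩
    refine ⟨⟨max Cf 0 * max Cg 0, fun x => ?_⟩, (hf.union hg).subset fun x hx => ?_⟩
    · rw [Pi.mul_apply, abs_mul]
      exact mul_le_mul ((hCf x).trans (le_max_left _ _)) ((hCg x).trans (le_max_left _ _))
        (abs_nonneg _) (le_max_right _ _)
    · simp only [mem_union, mem_setOf_eq] at hx ⊢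
      by_contra h
      push_neg at h
      exact hx (h.1.mul h.2)
  algebraMap_mem' := fun r => by
    refine ⟨⟨|r|, fun x => le_of_eq rfl⟩, Set.finite_empty.subset fun x hx => ?_⟩
    exact absurd continuousAt_const hx

/-! The pointwise inverse of a function bounded away from `0` is bounded by the reciprocal of
that bound and is continuous wherever the function is; conversely, a bound `C` on the inverse of
a unit bounds the unit below by `1 / C`. -/

lemma inv_le_abs_of_mul_eq_one_of_abs_le {x y C : ℝ} (hxy : x * y = 1) (hy : |y| ≤ C) :
    C⁻¹ ≤ |x| := by
  have hy0 : 0 < |y| := abs_pos.mpr (right_ne_zero_of_mul_eq_one hxy)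
  calc C⁻¹ ≤ |y|⁻¹ := inv_anti₀ hy0 hy
    _ = |x| := (eq_inv_of_mul_eq_one_left (by rw [← abs_mul, hxy, abs_one])).symm

namespace pcAlg

variable {W : Type*} [TopologicalSpace W]

lemma inv_mem {f : W → ℝ} (hf : f ∈ pcAlg W) {ε : ℝ} (hε : 0 < ε) (hεf : ∀ x, ε ≤ |f x|) :
    f⁻¹ ∈ pcAlg W := by
  have hne : ∀ x, f x ≠ 0 := fun x => abs_pos.mp (hε.trans_le (hεf x))
  obtain ⟨-, hfin⟩ := hf
  refine ⟨⟨ε⁻¹, fun x => ?_⟩, hfin.subset fun x hx hc => hx (hc.inv₀ (hne x))⟩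
  rw [Pi.inv_apply, abs_inv]
  exact inv_anti₀ hε (hεf x)

theorem isUnit_iff (f : pcAlg W) : IsUnit f ↔ ∃ ε > (0 : ℝ), ∀ x, ε ≤ |f.1 x| := by
  constructor
  · rintro ⟨u, rfl⟩
    obtain ⟨⟨C, hC⟩, -⟩ := (↑u⁻¹ : pcAlg W).2
    have hmul : ∀ x, (u : pcAlg W).1 x * (↑u⁻¹ : pcAlg W).1 x = 1 := fun x =>
      congrFun (congrArg Subtype.val u.mul_inv) x
    -- `max C 1`, unlike `C`, is positive even when `W` is empty.
    exact ⟨(max C 1)⁻¹, by positivity, fun x =>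
      inv_le_abs_of_mul_eq_one_of_abs_le (hmul x) ((hC x).trans (le_max_left _ _))⟩
  · rintro ⟨ε, hε, hεf⟩
    refine .of_mul_eq_one ⟨_, inv_mem f.2 hε hεf⟩ (Subtype.ext (funext fun x => ?_))
    exact mul_inv_cancel₀ (abs_pos.mp (hε.trans_le (hεf x)))

end pcAlg

theorem pcAlg_isUnit_iff_general (a b : ℝ)
    (f : ↥(pcAlg ↥(Set.Icc a b))) :
    IsUnit f ↔ ∃ ε > (0 : ℝ), ∀ x : ↥(Set.Icc a b), ε ≤ |f.1 x| :=
  pcAlg.isUnit_iff f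

/-- In `R = C⁰_{b,D,<∞}(D)` for `D = [a,b]`, an element is a unit if and only if it
is bounded away from `0`. -/
theorem pcAlg_isUnit_iff (a b : ℝ) (hab : a < b)
    (f : ↥(pcAlg ↥(Set.Icc a b))) :
    IsUnit f ↔ ∃ ε > (0 : ℝ), ∀ x : ↥(Set.Icc a b), ε ≤ |f.1 x| :=
  pcAlg_isUnit_iff_general a b f
end

section
/- Let R = C⁰_{b,D,<∞}(D) for D = [a,b] with a < b. For each x ∈ D, the set m_x = {f ∈ R : f(x) = 0} is a maximal ideal of R, and the set T = {m_x : x ∈ D}, with the subspace topology inherited from the Zariski topology on Specm(R), is a discrete topological space. -/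
open Set Filter Topology

/-- The ideal `m_x = {f : f x = 0}` of `R = C⁰_{b,D,<∞}(D)`. -/
def evalZeroIdeal (a b : ℝ) (x : ↥(Set.Icc a b)) : Ideal ↥(pcAlg ↥(Set.Icc a b)) where
  carrier := {f | f.1 x = 0}
  zero_mem' := rfl
  add_mem' := by
    intro f g hf hg
    show f.1 x + g.1 x = 0
    rw [hf, hg, add_zero]
  smul_mem' := by
    intro c f hf
    show c.1 x * f.1 x = 0
    rw [hf, mul_zero]

/-!
Evaluation at `x` is a surjective character of `R`, so its kernel `m_x` is maximal. The indicator
of `{x}` lies in `R` and belongs to every `m_y` with `y ≠ x` but not to `m_x`, so the basic open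
set it defines meets `T` only in `m_x`.
-/

theorem MaximalSpectrum.discreteTopology_of_forall_exists_notMem {R : Type*} [CommRing R]
    (S : Set (MaximalSpectrum R))
    (hS : ∀ I ∈ S, ∃ f : R, f ∉ I.asIdeal ∧ ∀ J ∈ S, f ∉ J.asIdeal → J = I) :
    DiscreteTopology S := by
  rw [discreteTopology_iff_isOpen_singleton]
  rintro ⟨I, hI⟩
  obtain ⟨f, hfI, hf⟩ := hS I hI
  have hD : IsOpen (toPrimeSpectrum ⁻¹' (PrimeSpectrum.basicOpen f : Set (PrimeSpectrum R))) :=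
    (PrimeSpectrum.basicOpen f).isOpen.preimage toPrimeSpectrum_continuous
  convert hD.preimage continuous_subtype_val
  ext ⟨J, hJ⟩
  simp only [mem_singleton_iff, Subtype.mk.injEq, mem_preimage]
  exact ⟨fun h => h ▸ hfI, hf J hJ⟩

theorem indicator_singleton_one_mem_pcAlg {W : Type*} [TopologicalSpace W] [T1Space W] (x : W) :
    ({x} : Set W).indicator 1 ∈ pcAlg W := by
  refine ⟨⟨1, fun y => ?_⟩, (finite_singleton x).subset fun y hy => ?_⟩
  · by_cases hy : y = x <;> simp [hy]
  · by_contra hne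
    refine hy (continuousAt_const (y := (0 : ℝ)) |>.congr ?_)
    filter_upwards [compl_singleton_mem_nhds hne] with z hz
    exact (indicator_of_notMem hz _).symm

def pcAlg.eval {W : Type*} [TopologicalSpace W] (x : W) : pcAlg W →ₐ[ℝ] ℝ :=
  (Pi.evalAlgHom ℝ (fun _ : W => ℝ) x).comp (pcAlg W).val

theorem pcAlg.ker_eval_isMaximal {W : Type*} [TopologicalSpace W] (x : W) :
    (RingHom.ker (pcAlg.eval x)).IsMaximal :=
  RingHom.ker_isMaximal_of_surjective _ fun r => ⟨algebraMap ℝ _ r, by simp [pcAlg.eval]⟩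

theorem evalZeroIdeal_eq_ker_eval (a b : ℝ) (x : Icc a b) :
    evalZeroIdeal a b x = RingHom.ker (pcAlg.eval x) :=
  rfl

theorem evalZeroIdeal_isMaximal_and_discrete_general (a b : ℝ) :
    (∀ x : ↥(Set.Icc a b), (evalZeroIdeal a b x).IsMaximal) ∧
      DiscreteTopology
        {I : MaximalSpectrum ↥(pcAlg ↥(Set.Icc a b)) |
          ∃ x : ↥(Set.Icc a b), I.asIdeal = evalZeroIdeal a b x} := by
  refine ⟨fun x => evalZeroIdeal_eq_ker_eval a b x ▸ pcAlg.ker_eval_isMaximal x, ?_⟩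
  refine MaximalSpectrum.discreteTopology_of_forall_exists_notMem _ ?_
  rintro I ⟨x, hIx⟩
  let δx : pcAlg (Icc a b) := ⟨_, indicator_singleton_one_mem_pcAlg x⟩
  have hδx : ∀ y, δx ∈ evalZeroIdeal a b y ↔ y ≠ x := fun y => by
    change indicator _ _ y = 0 ↔ _
    by_cases h : y = x <;> simp [h]
  refine ⟨δx, by simp [hIx, hδx], ?_⟩
  rintro J ⟨y, hJy⟩ hJ
  rw [hJy, hδx, not_not] at hJ
  exact MaximalSpectrum.ext (hJy.trans (hJ ▸ hIx.symm))

/-- For `R = C⁰_{b,D,<∞}(D)`, each `m_x` is a maximal ideal and the set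
`T = {m_x : x ∈ D}` is discrete in the Zariski topology of `Specm(R)`. -/
theorem evalZeroIdeal_isMaximal_and_discrete (a b : ℝ) (hab : a < b) :
    (∀ x : ↥(Set.Icc a b), (evalZeroIdeal a b x).IsMaximal) ∧
      DiscreteTopology
        {I : MaximalSpectrum ↥(pcAlg ↥(Set.Icc a b)) |
          ∃ x : ↥(Set.Icc a b), I.asIdeal = evalZeroIdeal a b x} :=
  evalZeroIdeal_isMaximal_and_discrete_general a b
end

section
/- Let R = C⁰_{b,D,<∞}(D) for D = [a,b] with a < b. Let I be an ideal of R such that every f ∈ I with f(x) ≠ 0 for all x ∈ D is a unit of R. Then I = R if and only if the intersection over all f ∈ I of the closures (in D) of the zero sets Z(f) = {x ∈ D : f(x) = 0} is empty. -/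
open Set Filter Topology

/-!
If the closures of the zero sets of the members of `I` have empty intersection, compactness of
`[a, b]` yields finitely many `fᵢ ∈ I` without a common zero, and `∑ fᵢ²` is then a nowhere
vanishing member of `I`, hence a unit. Conversely `1 ∈ ⊤` has no zeros at all.
-/

section ZeroSet

variable {X : Type*} {S : Subalgebra ℝ (X → ℝ)}

theorem Subalgebra.sum_mul_self_apply_eq_zero_iff {ι : Type*} (t : Finset ι) (f : ι → S)
    (x : X) : (∑ i ∈ t, f i * f i).1 x = 0 ↔ ∀ i ∈ t, (f i).1 x = 0 := by
  simpa [Finset.sum_apply] using Finset.sum_mul_self_eq_zero_iff t fun i => (f i).1 x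

theorem Ideal.eq_top_iff_exists_mem_forall_ne_zero {I : Ideal S}
    (hI : ∀ f ∈ I, (∀ x, f.1 x ≠ 0) → IsUnit f) : I = ⊤ ↔ ∃ f ∈ I, ∀ x, f.1 x ≠ 0 :=
  ⟨fun h => ⟨1, h ▸ Submodule.mem_top, fun _ => one_ne_zero⟩,
    fun ⟨f, hfI, hf⟩ => I.eq_top_of_isUnit_mem hfI (hI f hfI hf)⟩

variable [TopologicalSpace X]

theorem iInter_closure_zeroSet_eq_empty_of_mem {I : Ideal S} {f : S} (hfI : f ∈ I)
    (hf : ∀ x, f.1 x ≠ 0) : (⋂ g ∈ I, closure {x | g.1 x = 0}) = ∅ :=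
  eq_empty_of_subset_empty <| (biInter_subset_of_mem hfI).trans <| by simp [hf]

theorem exists_mem_forall_ne_zero_of_iInter_closure_zeroSet_eq_empty [CompactSpace X]
    {I : Ideal S} (h : (⋂ g ∈ I, closure {x | g.1 x = 0}) = ∅) :
    ∃ f ∈ I, ∀ x, f.1 x ≠ 0 := by
  obtain ⟨t, ht⟩ := isCompact_univ.elim_finite_subfamily_closed
    (fun g : I => closure {x | g.1.1 x = 0}) (fun _ => isClosed_closure) <| by
      rw [univ_inter, ← h]
      ext x
      simp only [mem_iInter]
      exact ⟨fun hx g hg => hx ⟨g, hg⟩, fun hx g => hx g.1 g.2⟩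
  refine ⟨∑ g ∈ t, g.1 * g.1, sum_mem fun g _ => I.mul_mem_left _ g.2, fun x hx => ?_⟩
  have hx : x ∈ ⋂ g ∈ t, closure {x | g.1.1 x = 0} := mem_iInter₂.2 fun g hg =>
    subset_closure ((Subalgebra.sum_mul_self_apply_eq_zero_iff t _ x).1 hx g hg)
  rwa [← univ_inter (⋂ g ∈ t, _), ht] at hx

theorem exists_mem_forall_ne_zero_iff_iInter_closure_zeroSet_eq_empty [CompactSpace X]
    {I : Ideal S} : (∃ f ∈ I, ∀ x, f.1 x ≠ 0) ↔ (⋂ g ∈ I, closure {x | g.1 x = 0}) = ∅ :=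
  ⟨fun ⟨_, hfI, hf⟩ => iInter_closure_zeroSet_eq_empty_of_mem hfI hf,
    exists_mem_forall_ne_zero_of_iInter_closure_zeroSet_eq_empty⟩

end ZeroSet

theorem pcAlg_ideal_eq_top_iff_iInter_closure_zeroSet_empty_general (a b : ℝ)
    (I : Ideal ↥(pcAlg ↥(Set.Icc a b)))
    (hNI : ∀ f ∈ I, (∀ x : ↥(Set.Icc a b), f.1 x ≠ 0) → IsUnit f) :
    I = ⊤ ↔ (⋂ f ∈ I, closure {x : ↥(Set.Icc a b) | f.1 x = 0}) = ∅ :=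
  (Ideal.eq_top_iff_exists_mem_forall_ne_zero hNI).trans
    exists_mem_forall_ne_zero_iff_iInter_closure_zeroSet_eq_empty

/-- Let `I` be an ideal of `R = C⁰_{b,D,<∞}(D)` such that every `f ∈ I` which is
nowhere zero is a unit.  Then `I = R` iff the intersection of the closures of the
zero sets of the members of `I` is empty. -/
theorem pcAlg_ideal_eq_top_iff_iInter_closure_zeroSet_empty (a b : ℝ) (hab : a < b)
    (I : Ideal ↥(pcAlg ↥(Set.Icc a b)))
    (hNI : ∀ f ∈ I, (∀ x : ↥(Set.Icc a b), f.1 x ≠ 0) → IsUnit f) :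
    I = ⊤ ↔ (⋂ f ∈ I, closure {x : ↥(Set.Icc a b) | f.1 x = 0}) = ∅ :=
  pcAlg_ideal_eq_top_iff_iInter_closure_zeroSet_empty_general a b I hNI
end

section
/- Let R = C⁰_{b,D,<∞}(D) for D = [a,b] with a < b. For each x ∈ D let φ_x ∈ R be defined by φ_x(y) = 1 if y = x and φ_x(y) = 0 otherwise, and let I be the ideal of R generated by {φ_x : x ∈ D}. Then I is a proper ideal of R (1 ∉ I), while the intersection over all f ∈ I of the zero sets Z(f) = {y ∈ D : f(y) = 0} is empty. -/
/-!
The span of the `φ_x` lies in the ideal of finitely supported functions, which misses `1` because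
`[a, b]` is infinite; yet every point `y` is a non-zero of `φ_y`, so no point is a common zero.
-/

open Set Filter Topology

theorem continuousAt_ite_of_not_frontier {X : Type*} [TopologicalSpace X]
    (p : X → Prop) [DecidablePred p] {y : X} (h : y ∉ frontier {z | p z}) (c d : ℝ) :
    ContinuousAt (fun z => if p z then c else d) y := by
  rw [frontier, Set.mem_diff, not_and, not_not] at h
  by_cases hy : y ∈ closure {z | p z}
  · have hs : {z | p z} ∈ 𝓝 y := mem_interior_iff_mem_nhds.mp (h hy)
    have he : (fun _ : X => c) =ᶠ[𝓝 y] (fun z => if p z then c else d) := by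
      filter_upwards [hs] with z hz
      simp [hz]
    exact continuousAt_const.congr he
  · have hy' : y ∈ interior {z | p z}ᶜ := by rw [interior_compl]; exact hy
    have hs : {z | p z}ᶜ ∈ 𝓝 y := mem_interior_iff_mem_nhds.mp hy'
    have he : (fun _ : X => d) =ᶠ[𝓝 y] (fun z => if p z then c else d) := by
      filter_upwards [hs] with z hz
      simp only [Set.mem_compl_iff, Set.mem_setOf_eq] at hz
      simp [hz]
    exact continuousAt_const.congr he


theorem phi_mem (a b : ℝ) (x : ↥(Set.Icc a b)) :
    (fun y : ↥(Set.Icc a b) => if y = x then (1 : ℝ) else 0) ∈ pcAlg ↥(Set.Icc a b) := by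
  constructor
  · exact ⟨1, fun y => by dsimp only; split_ifs <;> simp⟩
  · refine (Set.finite_singleton x).subset fun y hy => ?_
    simp only [Set.mem_setOf_eq] at hy
    simp only [Set.mem_singleton_iff]
    by_contra hne
    apply hy
    apply continuousAt_ite_of_not_frontier (fun z : ↥(Set.Icc a b) => z = x)
    intro hf
    have hsub : frontier {z : ↥(Set.Icc a b) | z = x} ⊆ {x} := by
      refine frontier_subset_closure.trans ?_
      have h1 : {z : ↥(Set.Icc a b) | z = x} = {x} := rfl
      rw [h1, closure_singleton]
    exact hne (hsub hf)

noncomputable def phiFun (a b : ℝ) (x : ↥(Set.Icc a b)) : ↥(pcAlg ↥(Set.Icc a b)) :=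
  ⟨fun y => if y = x then (1 : ℝ) else 0, phi_mem a b x⟩

section FiniteSupport

variable {k W : Type*} [CommSemiring k]

def finiteSupportIdeal (S : Subalgebra k (W → k)) : Ideal S where
  carrier := {f | (Function.support (f : W → k)).Finite}
  zero_mem' := by simp
  add_mem' {f g} hf hg := (hf.union hg).subset (Function.support_add _ _)
  smul_mem' c f hf := hf.subset (Function.support_mul_subset_right _ _)

theorem mem_finiteSupportIdeal {S : Subalgebra k (W → k)} {f : S} :
    f ∈ finiteSupportIdeal S ↔ (Function.support (f : W → k)).Finite :=
  Iff.rfl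

theorem one_notMem_finiteSupportIdeal [Infinite W] [Nontrivial k] (S : Subalgebra k (W → k)) :
    1 ∉ finiteSupportIdeal S := by
  rw [mem_finiteSupportIdeal, Subalgebra.coe_one, Function.support_one]
  exact infinite_univ

end FiniteSupport

theorem phiFun_apply (a b : ℝ) (x y : Icc a b) :
    (phiFun a b x : Icc a b → ℝ) y = if y = x then 1 else 0 :=
  rfl

theorem support_phiFun (a b : ℝ) (x : Icc a b) :
    Function.support (phiFun a b x : Icc a b → ℝ) = {x} := by
  ext y
  simp [phiFun_apply]

theorem span_phiFun_le_finiteSupportIdeal (a b : ℝ) :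
    Ideal.span (range (phiFun a b)) ≤ finiteSupportIdeal (pcAlg (Icc a b)) := by
  rw [Ideal.span_le]
  rintro _ ⟨x, rfl⟩
  simp [mem_finiteSupportIdeal, support_phiFun]

/-- The ideal of `R = C⁰_{b,D,<∞}(D)` generated by all the `φ_x`, `x ∈ D`, is a
proper ideal, yet the intersection of the zero sets of its members is empty. -/
theorem span_phiFun_proper_and_iInter_zeroSet_empty (a b : ℝ) (hab : a < b) :
    (1 : ↥(pcAlg ↥(Set.Icc a b))) ∉ Ideal.span (Set.range (phiFun a b)) ∧
      (⋂ f ∈ Ideal.span (Set.range (phiFun a b)),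
        {y : ↥(Set.Icc a b) | f.1 y = 0}) = ∅ := by
  have : Infinite ↥(Icc a b) := Icc.infinite hab
  refine ⟨fun h => one_notMem_finiteSupportIdeal _ (span_phiFun_le_finiteSupportIdeal a b h), ?_⟩
  refine eq_empty_of_forall_notMem fun y hy => ?_
  have hφ := mem_iInter₂.mp hy (phiFun a b y) (Ideal.subset_span ⟨y, rfl⟩)
  simp [phiFun_apply] at hφ
end

section
/- Let R = C⁰_{b,D,<∞}(D) for D = [a,b] with a < b, let x ∈ (a,b), and let N ∈ ℕ be such that 1/N < x − a. For each n ≥ N define f_n ∈ R by f_n(y) = 0 if y ∈ [x − 1/n, x) and f_n(y) = 1 otherwise, and let I be the ideal of R generated by {f_n : n ≥ N}. Then: (i) for every finite subset J ⊆ I, the intersection over f ∈ J of the zero sets Z(f) is nonempty; (ii) the intersection over all f ∈ I of Z(f) is empty; (iii) the intersection over all f ∈ I of the closures (in D) of Z(f) equals {x}. -/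
open Set Filter Topology

theorem stepFun_mem (a b x : ℝ) (n : ℕ) :
    (fun y : ↥(Set.Icc a b) => if x - 1 / (n : ℝ) ≤ y.1 ∧ y.1 < x then (0 : ℝ) else 1) ∈
      pcAlg ↥(Set.Icc a b) := by
  constructor
  · exact ⟨1, fun y => by dsimp only; split_ifs <;> simp⟩
  · have hfin : (Subtype.val ⁻¹' ({x - 1 / (n : ℝ), x} : Set ℝ) : Set ↥(Set.Icc a b)).Finite :=
      Set.Finite.preimage (Set.injOn_of_injective Subtype.val_injective)
        ((Set.finite_singleton x).insert _)
    refine hfin.subset fun y hy => ?_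
    simp only [Set.mem_setOf_eq] at hy
    by_contra hmem
    apply hy
    apply continuousAt_ite_of_not_frontier
      (fun z : ↥(Set.Icc a b) => x - 1 / (n : ℝ) ≤ z.1 ∧ z.1 < x)
    intro hf
    have h1 : {z : ↥(Set.Icc a b) | x - 1 / (n : ℝ) ≤ z.1 ∧ z.1 < x} =
        Subtype.val ⁻¹' Set.Ico (x - 1 / (n : ℝ)) x := rfl
    rw [h1] at hf
    have h2 := continuous_subtype_val.frontier_preimage_subset (Set.Ico (x - 1 / (n : ℝ)) x) hf
    apply hmem
    have h3 : frontier (Set.Ico (x - 1 / (n : ℝ)) x) ⊆ {x - 1 / (n : ℝ), x} := by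
      by_cases hc : x - 1 / (n : ℝ) < x
      · rw [frontier_Ico hc]
      · rw [Set.Ico_eq_empty hc, frontier_empty]
        exact Set.empty_subset _
    exact h3 h2

/-- The function `f_n ∈ R` which is `0` on `[x - 1/n, x)` and `1` elsewhere. -/
noncomputable def stepFun (a b x : ℝ) (n : ℕ) : ↥(pcAlg ↥(Set.Icc a b)) :=
  ⟨fun y => if x - 1 / (n : ℝ) ≤ y.1 ∧ y.1 < x then (0 : ℝ) else 1, stepFun_mem a b x n⟩

/-!
Every member of the ideal vanishes on some `[x - ε, x) ∩ D`, i.e. eventually along the filter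
`comap (↑) (𝓝[<] x)` on `D`: the generators do, and such functions form an ideal, the kernel of
the map to germs. Since `a < x` this filter is nontrivial and converges to `x`, which gives (i)
and `x ∈ closure (Z f)`. Conversely, the zero sets `[x - 1/n, x)` of the generators have empty
intersection and their closures `[x - 1/n, x]` intersect in `{x}`.
-/

theorem Subalgebra.eventuallyEq_zero_of_mem_span {W R : Type*} [CommRing R]
    {S : Subalgebra R (W → R)} {l : Filter W} {s : Set S}
    (hs : ∀ g ∈ s, (g : W → R) =ᶠ[l] 0) {f : S} (hf : f ∈ Ideal.span s) :
    (f : W → R) =ᶠ[l] 0 := by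
  let germIdeal : Ideal S := RingHom.ker ((Germ.coeRingHom l).comp (S.val : S →+* (W → R)))
  have hmem : ∀ g : S, g ∈ germIdeal ↔ (g : W → R) =ᶠ[l] 0 := fun g => Germ.coe_eq
  exact (hmem f).1 (Ideal.span_le.2 (fun g hg => (hmem g).2 (hs g hg)) hf)

theorem comap_val_nhdsLT_neBot {s : Set ℝ} {x : ℝ} (hs : s ∈ 𝓝[<] x) :
    (comap ((↑) : s → ℝ) (𝓝[<] x)).NeBot :=
  NeBot.comap_of_range_mem inferInstance (Subtype.range_coe ▸ hs)

theorem exists_le_lt_sub_one_div {x y : ℝ} (N : ℕ) (hy : y < x) :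
    ∃ n, N ≤ n ∧ y < x - 1 / (n : ℝ) := by
  obtain ⟨k, hk⟩ := exists_nat_one_div_lt (sub_pos.2 hy)
  refine ⟨max N (k + 1), le_max_left _ _, ?_⟩
  have : 1 / ((max N (k + 1) : ℕ) : ℝ) ≤ 1 / ((k : ℝ) + 1) :=
    one_div_le_one_div_of_le (by positivity) (by exact_mod_cast le_max_right N (k + 1))
  linarith

theorem biInter_Ico_sub_one_div (N : ℕ) (x : ℝ) :
    ⋂ n ≥ N, Ico (x - 1 / (n : ℝ)) x = ∅ := by
  refine eq_empty_of_forall_notMem fun y hy => ?_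
  simp only [mem_iInter, mem_Ico] at hy
  obtain ⟨n, hn, hyn⟩ := exists_le_lt_sub_one_div N (hy N le_rfl).2
  exact (hy n hn).1.not_gt hyn

theorem biInter_Icc_sub_one_div (N : ℕ) (x : ℝ) :
    ⋂ n ≥ N, Icc (x - 1 / (n : ℝ)) x = {x} := by
  refine Subset.antisymm (fun y hy => ?_) fun y hy => ?_
  · simp only [mem_iInter, mem_Icc] at hy
    refine (hy N le_rfl).2.eq_or_lt.resolve_right fun hyx => ?_
    obtain ⟨n, hn, hyn⟩ := exists_le_lt_sub_one_div N hyx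
    exact (hy n hn).1.not_gt hyn
  · simp only [mem_singleton_iff.1 hy, mem_iInter, mem_Icc]
    exact fun n _ => ⟨sub_le_self _ (by positivity), le_rfl⟩

section stepFun

variable {a b x : ℝ} {n : ℕ}

theorem stepFun_eq_zero_iff {y : Icc a b} :
    (stepFun a b x n).1 y = 0 ↔ y.1 ∈ Ico (x - 1 / (n : ℝ)) x := by
  change (if y.1 ∈ Ico (x - 1 / (n : ℝ)) x then (0 : ℝ) else 1) = 0 ↔ _
  split_ifs with h
  · exact iff_of_true rfl h
  · exact iff_of_false one_ne_zero h

theorem stepFun_eventuallyEq_zero (hn : 0 < n) :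
    (stepFun a b x n : Icc a b → ℝ) =ᶠ[comap (↑) (𝓝[<] x)] 0 := by
  have hlt : x - 1 / (n : ℝ) < x := sub_lt_self _ (by positivity)
  filter_upwards [preimage_mem_comap (Ico_mem_nhdsLT hlt)] with y hy
  exact stepFun_eq_zero_iff.2 hy

theorem closure_stepFun_zeroSet_subset :
    closure {y : Icc a b | (stepFun a b x n).1 y = 0} ⊆
      (↑) ⁻¹' Icc (x - 1 / (n : ℝ)) x := by
  refine (closure_mono fun y => stepFun_eq_zero_iff.1).trans ?_
  exact (continuous_subtype_val.closure_preimage_subset _).trans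
    (preimage_mono (isClosed_Icc.closure_subset_iff.2 Ico_subset_Icc_self))

end stepFun

theorem span_stepFun_properties_general (a b x : ℝ) (hx : x ∈ Set.Ioo a b)
    (N : ℕ) (hN : 0 < N) :
    (∀ J : Set ↥(pcAlg ↥(Set.Icc a b)), J.Finite →
        J ⊆ (Ideal.span {f | ∃ n, N ≤ n ∧ f = stepFun a b x n} :
          Ideal ↥(pcAlg ↥(Set.Icc a b))) →
        (⋂ f ∈ J, {y : ↥(Set.Icc a b) | f.1 y = 0}).Nonempty) ∧
      (⋂ f ∈ (Ideal.span {f | ∃ n, N ≤ n ∧ f = stepFun a b x n} :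
          Ideal ↥(pcAlg ↥(Set.Icc a b))),
        {y : ↥(Set.Icc a b) | f.1 y = 0}) = ∅ ∧
      (⋂ f ∈ (Ideal.span {f | ∃ n, N ≤ n ∧ f = stepFun a b x n} :
          Ideal ↥(pcAlg ↥(Set.Icc a b))),
        closure {y : ↥(Set.Icc a b) | f.1 y = 0}) =
        {(⟨x, Set.Ioo_subset_Icc_self hx⟩ : ↥(Set.Icc a b))} := by
  set I : Ideal (pcAlg (Icc a b)) := Ideal.span {f | ∃ n, N ≤ n ∧ f = stepFun a b x n}
  set l : Filter (Icc a b) := comap (↑) (𝓝[<] x)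
  have : l.NeBot := comap_val_nhdsLT_neBot (Icc_mem_nhdsLT_of_mem ⟨hx.1, hx.2.le⟩)
  have hI : ∀ f ∈ I, (f : Icc a b → ℝ) =ᶠ[l] 0 := fun f =>
    Subalgebra.eventuallyEq_zero_of_mem_span <| by
      rintro _ ⟨n, hn, rfl⟩
      exact stepFun_eventuallyEq_zero (hN.trans_le hn)
  have hgen : ∀ n ≥ N, stepFun a b x n ∈ I := fun n hn => Ideal.subset_span ⟨n, hn, rfl⟩
  refine ⟨fun J hJ hJI => ?_, ?_, ?_⟩
  · obtain ⟨y, hy⟩ := ((hJ.eventually_all).2 fun f hf => hI f (hJI hf)).exists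
    exact ⟨y, mem_iInter₂.2 hy⟩
  · refine eq_empty_of_forall_notMem fun y hy => ?_
    have : y.1 ∈ ⋂ n ≥ N, Ico (x - 1 / (n : ℝ)) x := mem_iInter₂.2 fun n hn =>
      stepFun_eq_zero_iff.1 (mem_iInter₂.1 hy _ (hgen n hn))
    rwa [biInter_Ico_sub_one_div] at this
  · refine Subset.antisymm (fun y hy => ?_) ?_
    · have : y.1 ∈ ⋂ n ≥ N, Icc (x - 1 / (n : ℝ)) x := mem_iInter₂.2 fun n hn =>
        closure_stepFun_zeroSet_subset (mem_iInter₂.1 hy _ (hgen n hn))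
      rw [biInter_Icc_sub_one_div] at this
      exact Subtype.ext this
    · refine singleton_subset_iff.2 (mem_iInter₂.2 fun f hf => ?_)
      have hl : Tendsto id l (𝓝 ⟨x, Ioo_subset_Icc_self hx⟩) := by
        rw [tendsto_id', nhds_subtype]
        exact comap_mono nhdsWithin_le_nhds
      exact mem_closure_of_tendsto hl (hI f hf)

/-- For the ideal `I` of `R = C⁰_{b,D,<∞}(D)` generated by the functions `f_n`
(`n ≥ N`, where `1/N < x - a`): (i) every finite subset of `I` has a common zero,
(ii) the members of `I` have no common zero, and (iii) the intersection of the
closures of the zero sets of the members of `I` is `{x}`. -/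
theorem span_stepFun_properties (a b x : ℝ) (hab : a < b) (hx : x ∈ Set.Ioo a b)
    (N : ℕ) (hN : 0 < N) (hNx : 1 / (N : ℝ) < x - a) :
    (∀ J : Set ↥(pcAlg ↥(Set.Icc a b)), J.Finite →
        J ⊆ (Ideal.span {f | ∃ n, N ≤ n ∧ f = stepFun a b x n} :
          Ideal ↥(pcAlg ↥(Set.Icc a b))) →
        (⋂ f ∈ J, {y : ↥(Set.Icc a b) | f.1 y = 0}).Nonempty) ∧
      (⋂ f ∈ (Ideal.span {f | ∃ n, N ≤ n ∧ f = stepFun a b x n} :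
          Ideal ↥(pcAlg ↥(Set.Icc a b))),
        {y : ↥(Set.Icc a b) | f.1 y = 0}) = ∅ ∧
      (⋂ f ∈ (Ideal.span {f | ∃ n, N ≤ n ∧ f = stepFun a b x n} :
          Ideal ↥(pcAlg ↥(Set.Icc a b))),
        closure {y : ↥(Set.Icc a b) | f.1 y = 0}) =
        {(⟨x, Set.Ioo_subset_Icc_self hx⟩ : ↥(Set.Icc a b))} :=
  span_stepFun_properties_general a b x hx N hN
end

section
/- Let R = C⁰_{b,D,<∞}(D) for D = [a,b] with a < b. Then every maximal ideal of R is real: for every maximal ideal m of R, every n ∈ ℕ and all f₁, …, f_n ∈ R, if f₁² + ⋯ + f_n² ∈ m then f_i ∈ m for all i = 1, …, n. -/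
/-! If `f i ∉ m`, pick `g` with `g * f i ≡ 1` modulo `m`. Multiplying the sum of squares by `g ^ 2`
shows `1 + ∑_{j ≠ i} (g * f j) ^ 2 ∈ m`, which is impossible when `1 + (sum of squares)` is always
a unit. In the algebra of bounded functions with finitely many discontinuities, such an element is
`≥ 1` everywhere, so its pointwise inverse is again bounded and has no new discontinuities. -/

open Set Filter Topology

theorem Ideal.IsMaximal.mem_of_sum_sq_mem {R : Type*} [CommRing R]
    (h : ∀ s : R, IsSumSq s → IsUnit (1 + s)) {m : Ideal R} (hm : m.IsMaximal)
    {ι : Type*} [DecidableEq ι] {t : Finset ι} {f : ι → R} (hsum : ∑ j ∈ t, f j ^ 2 ∈ m) :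
    ∀ i ∈ t, f i ∈ m := by
  intro i hi
  by_contra hfi
  obtain ⟨g, z, hz, hgz⟩ := hm.exists_inv hfi
  have hrest : 1 + ∑ j ∈ t.erase i, (g * f j) ^ 2
      = g ^ 2 * ∑ j ∈ t, f j ^ 2 + z * (1 + g * f i) := by
    rw [Finset.mul_sum, ← Finset.add_sum_erase t _ hi]
    simp only [mul_pow]
    linear_combination (-(1 + g * f i)) * hgz
  have hmem : 1 + ∑ j ∈ t.erase i, (g * f j) ^ 2 ∈ m := by
    rw [hrest]
    exact m.add_mem (m.mul_mem_left _ hsum) (m.mul_mem_right _ hz)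
  exact hm.ne_top (m.eq_top_of_isUnit_mem hmem (h _ (IsSumSq.sum_sq _ _)))

namespace pcAlg

variable {W : Type*} [TopologicalSpace W]

theorem isUnit_of_one_le {u : pcAlg W} (hu : ∀ x, 1 ≤ (u : W → ℝ) x) : IsUnit u := by
  have hne : ∀ x, (u : W → ℝ) x ≠ 0 := fun x => (one_pos.trans_le (hu x)).ne'
  have hmem : (fun x => ((u : W → ℝ) x)⁻¹) ∈ pcAlg W := by
    refine ⟨⟨1, fun x => ?_⟩, u.2.2.subset fun x hx h => hx (h.inv₀ (hne x))⟩
    rw [abs_inv]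
    exact inv_le_one_of_one_le₀ ((hu x).trans (le_abs_self _))
  exact IsUnit.of_mul_eq_one (a := u) ⟨_, hmem⟩
    (Subtype.ext (funext fun x => mul_inv_cancel₀ (hne x)))

theorem nonneg_of_isSumSq {s : pcAlg W} (hs : IsSumSq s) (x : W) : 0 ≤ (s : W → ℝ) x := by
  induction hs with
  | zero => simp
  | sq_add a _ ih =>
    simp only [Subalgebra.coe_add, Subalgebra.coe_mul, Pi.add_apply, Pi.mul_apply]
    exact add_nonneg (mul_self_nonneg _) ih

theorem isUnit_one_add_of_isSumSq (s : pcAlg W) (hs : IsSumSq s) : IsUnit (1 + s) :=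
  isUnit_of_one_le fun x => by
    simpa using nonneg_of_isSumSq hs x

end pcAlg

theorem maximalIdeal_pcAlg_isReal_general (a b : ℝ)
    (m : Ideal ↥(pcAlg ↥(Set.Icc a b))) (hm : m.IsMaximal)
    (n : ℕ) (f : Fin n → ↥(pcAlg ↥(Set.Icc a b)))
    (hsum : (∑ i, f i ^ 2) ∈ m) :
    ∀ i, f i ∈ m := fun i =>
  hm.mem_of_sum_sq_mem pcAlg.isUnit_one_add_of_isSumSq hsum i (Finset.mem_univ i)

/-- Every maximal ideal of `R = C⁰_{b,D,<∞}(D)` is real: if a finite sum of squares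
lies in a maximal ideal, then so does each of the elements being squared. -/
theorem maximalIdeal_pcAlg_isReal (a b : ℝ) (hab : a < b)
    (m : Ideal ↥(pcAlg ↥(Set.Icc a b))) (hm : m.IsMaximal)
    (n : ℕ) (f : Fin n → ↥(pcAlg ↥(Set.Icc a b)))
    (hsum : (∑ i, f i ^ 2) ∈ m) :
    ∀ i, f i ∈ m :=
  maximalIdeal_pcAlg_isReal_general a b m hm n f hsum
end
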